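/- arXiv:1902.00947 — 3 statements merged into one kernel-verified Lean document; each statement's English description precedes it below -/
import Mathlib

section
/- Let f : ℝ^d → ℝ be L-smooth and μ-strongly convex (0 < μ ≤ L) with minimizer x⋆, with coordinates partitioned into n blocks via projections U_1, …, U_n summing to the identity. For randomized block-coordinate descent x_{k+1} = x_k - δ_k U_{i_k} f'(x_k) with i_k uniform on {1,…,n}, E_{i_k}‖x_{k+1} - x⋆‖² ≤ ρ² ‖x_k - x⋆‖², where ρ² = max{ ((δ_k μ - 1)² + n - 1)/n, ((δ_k L - 1)² + n - 1)/n }. -/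
/-!
Write `y = x_k - x⋆`. Since the `U i` decompose every vector orthogonally and sum to the
identity, averaging the block steps over `i` gives `(n - 1) ‖y‖² + ‖y - δ f'(x_k)‖²`, so it
suffices to bound the full gradient step. The function `g = f - μ/2 ‖·‖²` is convex and so is
`(L - μ)/2 ‖·‖² - g` (its gradient is monotone by the Lipschitz bound on `f'`); together these
make `g'` cocoercive (Baillon–Haddad), which at `x_k, x⋆` (where `f'(x⋆) = 0`) says that
`f'(x_k)` lies in the ball of radius `(L - μ)/2 ‖y‖` about `(μ + L)/2 • y`. Writing
`y - δ f'(x_k) = (1 - δ (μ + L)/2) y - δ (f'(x_k) - (μ + L)/2 y)`, the triangle inequality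
gives `‖y - δ f'(x_k)‖ ≤ max |1 - δμ| |1 - δL| ‖y‖`.
-/

open Finset Set InnerProductSpace RealInnerProductSpace

section

variable {E : Type*} [NormedAddCommGroup E] [InnerProductSpace ℝ E]

theorem sum_norm_sub_sq_eq_of_sum_eq {ι : Type*} [Fintype ι] (y v : E) (w : ι → E)
    (hsum : ∑ i, w i = v) (hpyth : ∑ i, ‖w i‖ ^ 2 = ‖v‖ ^ 2) :
    ∑ i, ‖y - w i‖ ^ 2 = (Fintype.card ι - 1) * ‖y‖ ^ 2 + ‖y - v‖ ^ 2 := by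
  simp only [norm_sub_sq_real, Finset.sum_add_distrib, Finset.sum_sub_distrib, ← Finset.mul_sum,
    ← inner_sum, hsum, hpyth, Finset.sum_const, Finset.card_univ, nsmul_eq_mul]
  ring

theorem abs_add_abs_sq_le_max (a b : ℝ) : (|a| + |b|) ^ 2 ≤ max ((a + b) ^ 2) ((a - b) ^ 2) := by
  have hab : (|a| + |b|) ^ 2 = a ^ 2 + 2 * |a * b| + b ^ 2 := by
    rw [abs_mul, add_sq, sq_abs, sq_abs]
    ring
  rw [hab]
  rcases abs_cases (a * b) with ⟨h, -⟩ | ⟨h, -⟩ <;> rw [h]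
  · exact le_max_of_le_left (le_of_eq (by ring))
  · exact le_max_of_le_right (le_of_eq (by ring))

theorem norm_sub_smul_sq_le_of_norm_sub_sq_le {μ L : ℝ} (hμL : μ ≤ L) {y v : E}
    (h : ‖v - μ • y‖ ^ 2 ≤ (L - μ) * ⟪v - μ • y, y⟫) (δ : ℝ) :
    ‖y - δ • v‖ ^ 2 ≤ max ((δ * μ - 1) ^ 2) ((δ * L - 1) ^ 2) * ‖y‖ ^ 2 := by
  set c := (μ + L) / 2
  set r := (L - μ) / 2
  have hr : 0 ≤ r := by simp only [r]; linarith
  have hball : ‖v - c • y‖ ≤ r * ‖y‖ := by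
    have hsq : ‖v - c • y‖ ^ 2 ≤ (r * ‖y‖) ^ 2 := by
      have e : v - c • y = (v - μ • y) - r • y := by simp only [c, r]; module
      rw [e, norm_sub_sq_real, real_inner_smul_right, norm_smul, Real.norm_of_nonneg hr]
      simp only [r]; nlinarith
    exact le_of_sq_le_sq hsq (by positivity)
  have htri : ‖y - δ • v‖ ≤ (|1 - δ * c| + |δ * r|) * ‖y‖ := by
    have e : y - δ • v = (1 - δ * c) • y - δ • (v - c • y) := by module
    calc ‖y - δ • v‖ ≤ |1 - δ * c| * ‖y‖ + |δ| * ‖v - c • y‖ := by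
          rw [e, ← Real.norm_eq_abs, ← Real.norm_eq_abs, ← norm_smul, ← norm_smul]
          exact norm_sub_le _ _
      _ ≤ |1 - δ * c| * ‖y‖ + |δ| * (r * ‖y‖) := by gcongr
      _ = (|1 - δ * c| + |δ * r|) * ‖y‖ := by rw [abs_mul, abs_of_nonneg hr]; ring
  calc ‖y - δ • v‖ ^ 2 ≤ ((|1 - δ * c| + |δ * r|) * ‖y‖) ^ 2 := by gcongr
    _ ≤ max ((δ * μ - 1) ^ 2) ((δ * L - 1) ^ 2) * ‖y‖ ^ 2 := by
      rw [mul_pow]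
      gcongr
      refine (abs_add_abs_sq_le_max _ _).trans_eq ?_
      simp only [c, r]
      congr 1 <;> ring

variable [CompleteSpace E]
  {g h : E → ℝ} {g' : E → E} {a b x : E}

theorem IsLocalMin.hasGradientAt_eq_zero (hx : IsLocalMin g x) (hg : HasGradientAt g a x) :
    a = 0 := by
  apply (toDual ℝ E).injective
  rw [hx.hasFDerivAt_eq_zero hg.hasFDerivAt, map_zero]

theorem HasGradientAt.sub (hg : HasGradientAt g a x) (hh : HasGradientAt h b x) :
    HasGradientAt (fun y => g y - h y) (a - b) x := by
  rw [hasGradientAt_iff_hasFDerivAt, map_sub]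
  exact hg.hasFDerivAt.sub hh.hasFDerivAt

theorem hasGradientAt_half_mul_norm_sq (c : ℝ) (x : E) :
    HasGradientAt (fun y => c / 2 * ‖y‖ ^ 2) (c • x) x := by
  have hdual : toDual ℝ E (c • x) = (c / 2) • (2 • innerSL ℝ x) := by
    ext v
    simp only [map_smul, smul_apply, toDual_apply_apply, smul_eq_mul,
      coe_innerSL_apply, nsmul_eq_mul, Nat.cast_ofNat]
    ring
  rw [hasGradientAt_iff_hasFDerivAt, hdual]
  exact (hasStrictFDerivAt_norm_sq x).hasFDerivAt.const_mul (c / 2)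

theorem HasGradientAt.hasDerivAt_comp_add_smul {v : E} {t : ℝ}
    (hg : HasGradientAt g a (x + t • v)) :
    HasDerivAt (fun s : ℝ => g (x + s • v)) ⟪a, v⟫ t := by
  have hline : HasDerivAt (fun s : ℝ => x + s • v) v t := by
    simpa using ((hasDerivAt_id t).smul_const v).const_add x
  have hcomp := hg.hasFDerivAt.comp_hasDerivAt t hline
  simp only [toDual_apply_apply] at hcomp
  exact hcomp

theorem ConvexOn.add_inner_le_of_hasGradientAt (hc : ConvexOn ℝ univ g)
    (hg : HasGradientAt g a x) (z : E) : g x + ⟪a, z - x⟫ ≤ g z := by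
  have hline : ConvexOn ℝ univ (fun t : ℝ => g (x + t • (z - x))) := by
    have heq : g ∘ AffineMap.lineMap (k := ℝ) x z = fun t => g (x + t • (z - x)) := by
      funext t
      simp only [Function.comp, AffineMap.lineMap_apply_module]
      congr 1
      module
    simpa [heq] using hc.comp_affineMap (AffineMap.lineMap x z)
  have hderiv := (show x + (0 : ℝ) • (z - x) = x by simp) ▸ hg
  have := hline.le_slope_of_hasDerivAt (mem_univ 0) (mem_univ 1) one_pos
    hderiv.hasDerivAt_comp_add_smul
  simp only [slope_def_field, one_smul, add_sub_cancel, zero_smul, add_zero, sub_zero, div_one]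
    at this
  linarith

theorem convexOn_univ_of_inner_gradient_sub_nonneg (hg : ∀ x, HasGradientAt g (g' x) x)
    (hmono : ∀ x y, 0 ≤ ⟪g' x - g' y, x - y⟫) : ConvexOn ℝ univ g := by
  refine ⟨convex_univ, ?_⟩
  rintro x - z - a b ha hb hab
  set v := z - x
  have hderiv (t : ℝ) : HasDerivAt (fun s : ℝ => g (x + s • v)) ⟪g' (x + t • v), v⟫ t :=
    (hg _).hasDerivAt_comp_add_smul
  have hline : ConvexOn ℝ univ (fun t : ℝ => g (x + t • v)) := by
    refine Monotone.convexOn_univ_of_deriv (fun t => (hderiv t).differentiableAt) ?_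
    intro s t hst
    simp only [(hderiv _).deriv]
    rcases hst.eq_or_lt with rfl | hst
    · rfl
    have h := hmono (x + t • v) (x + s • v)
    rw [show x + t • v - (x + s • v) = (t - s) • v by module, real_inner_smul_right,
      inner_sub_left] at h
    linarith [nonneg_of_mul_nonneg_right h (sub_pos.2 hst)]
  have hcomb := hline.2 (mem_univ 0) (mem_univ 1) ha hb hab
  simp only [smul_eq_mul, mul_zero, mul_one, zero_add, zero_smul, add_zero, one_smul, v,
    add_sub_cancel] at hcomb ⊢
  convert hcomb using 2
  rw [show a = 1 - b by linarith]
  module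

theorem convexOn_univ_half_mul_norm_sq_sub {L : ℝ} (hg : ∀ x, HasGradientAt g (g' x) x)
    (hL : ∀ x y, ‖g' x - g' y‖ ≤ L * ‖x - y‖) :
    ConvexOn ℝ univ (fun x => L / 2 * ‖x‖ ^ 2 - g x) := by
  refine convexOn_univ_of_inner_gradient_sub_nonneg
    (fun x => (hasGradientAt_half_mul_norm_sq L x).sub (hg x)) fun x y => ?_
  rw [show L • x - g' x - (L • y - g' y) = L • (x - y) - (g' x - g' y) by module,
    inner_sub_left, real_inner_smul_left, real_inner_self_eq_norm_sq]
  nlinarith [real_inner_le_norm (g' x - g' y) (x - y),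
    mul_le_mul_of_nonneg_right (hL x y) (norm_nonneg (x - y))]

variable {M : ℝ}

theorem ConvexOn.le_add_inner_add_half_mul_norm_sq
    (hq : ConvexOn ℝ univ (fun x => M / 2 * ‖x‖ ^ 2 - g x)) (hg : HasGradientAt g a x) (z : E) :
    g z ≤ g x + ⟪a, z - x⟫ + M / 2 * ‖z - x‖ ^ 2 := by
  have h := hq.add_inner_le_of_hasGradientAt ((hasGradientAt_half_mul_norm_sq M x).sub hg) z
  rw [inner_sub_left, real_inner_smul_left, inner_sub_right, real_inner_self_eq_norm_sq] at h
  rw [norm_sub_sq_real, real_inner_comm x z]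
  linarith

theorem ConvexOn.add_inner_add_mul_norm_sq_le (hc : ConvexOn ℝ univ g)
    (hq : ConvexOn ℝ univ (fun x => M / 2 * ‖x‖ ^ 2 - g x)) (hg : ∀ x, HasGradientAt g (g' x) x)
    (x y : E) (t : ℝ) :
    g x + ⟪g' x, y - x⟫ + (t - M * t ^ 2 / 2) * ‖g' y - g' x‖ ^ 2 ≤ g y := by
  set w := g' y - g' x
  have hlow := hc.add_inner_le_of_hasGradientAt (hg x) (y - t • w)
  have hup := hq.le_add_inner_add_half_mul_norm_sq (hg y) (y - t • w)
  rw [show y - t • w - x = (y - x) - t • w by abel, inner_sub_right, real_inner_smul_right]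
    at hlow
  rw [show y - t • w - y = -(t • w) by abel, inner_neg_right, real_inner_smul_right, norm_neg,
    norm_smul, Real.norm_eq_abs, mul_pow, sq_abs] at hup
  have hw : ⟪g' y, w⟫ - ⟪g' x, w⟫ = ‖w‖ ^ 2 := by
    rw [← inner_sub_left, real_inner_self_eq_norm_sq]
  linear_combination hlow + hup - t * hw

theorem ConvexOn.norm_gradient_sub_sq_le (hc : ConvexOn ℝ univ g)
    (hq : ConvexOn ℝ univ (fun x => M / 2 * ‖x‖ ^ 2 - g x)) (hg : ∀ x, HasGradientAt g (g' x) x)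
    (hM : 0 ≤ M) (x y : E) :
    ‖g' x - g' y‖ ^ 2 ≤ M * ⟪g' x - g' y, x - y⟫ := by
  have key (t : ℝ) : (2 * t - M * t ^ 2) * ‖g' x - g' y‖ ^ 2 ≤ ⟪g' x - g' y, x - y⟫ := by
    have hxy := hc.add_inner_add_mul_norm_sq_le hq hg x y t
    have hyx := hc.add_inner_add_mul_norm_sq_le hq hg y x t
    rw [norm_sub_rev] at hxy
    rw [inner_sub_left, show y - x = -(x - y) by abel, inner_neg_right] at *
    linarith
  set A := ‖g' x - g' y‖ ^ 2
  set c := ⟪g' x - g' y, x - y⟫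
  rcases hM.eq_or_lt with rfl | hM
  · by_contra! hA
    rw [zero_mul] at hA
    have := key ((c + 1) / (2 * A))
    rw [show (2 * ((c + 1) / (2 * A)) - 0 * _) * A = c + 1 by field_simp; ring] at this
    linarith
  · have := key M⁻¹
    rw [show (2 * M⁻¹ - M * M⁻¹ ^ 2) * A = M⁻¹ * A by field_simp; ring] at this
    rwa [inv_mul_le_iff₀ hM] at this

theorem norm_gradient_sub_sub_smul_sq_le {f : E → ℝ} {f' : E → E} {μ L : ℝ} (hμL : μ ≤ L)
    (hgrad : ∀ x, HasGradientAt f (f' x) x) (hsc : ConvexOn ℝ univ (fun x => f x - μ / 2 * ‖x‖ ^ 2))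
    (hsmooth : ∀ x y, ‖f' x - f' y‖ ≤ L * ‖x - y‖) (x y : E) :
    ‖f' x - f' y - μ • (x - y)‖ ^ 2 ≤ (L - μ) * ⟪f' x - f' y - μ • (x - y), x - y⟫ := by
  have hq : ConvexOn ℝ univ (fun x => (L - μ) / 2 * ‖x‖ ^ 2 - (f x - μ / 2 * ‖x‖ ^ 2)) := by
    have heq : (fun x => (L - μ) / 2 * ‖x‖ ^ 2 - (f x - μ / 2 * ‖x‖ ^ 2))
        = fun x => L / 2 * ‖x‖ ^ 2 - f x := by
      funext x
      ring
    exact heq ▸ convexOn_univ_half_mul_norm_sq_sub hgrad hsmooth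
  have h := hsc.norm_gradient_sub_sq_le hq
    (fun x => (hgrad x).sub (hasGradientAt_half_mul_norm_sq μ x)) (sub_nonneg.2 hμL) x y
  rwa [show f' x - μ • x - (f' y - μ • y) = f' x - f' y - μ • (x - y) by module] at h

end

theorem block_coordinate_descent_strongly_convex_general {d n : ℕ}
    (L μ : ℝ) (hμL : μ ≤ L)
    (f : EuclideanSpace ℝ (Fin d) → ℝ)
    (f' : EuclideanSpace ℝ (Fin d) → EuclideanSpace ℝ (Fin d))
    (hgrad : ∀ x, HasGradientAt f (f' x) x)
    (hsc : ConvexOn ℝ Set.univ (fun x => f x - μ / 2 * ‖x‖ ^ 2))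
    (hsmooth : ∀ x y, ‖f' x - f' y‖ ≤ L * ‖x - y‖)
    (xstar : EuclideanSpace ℝ (Fin d)) (hmin : ∀ y, f xstar ≤ f y)
    (U : Fin n → EuclideanSpace ℝ (Fin d) →L[ℝ] EuclideanSpace ℝ (Fin d))
    (hUsum : ∀ x, ∑ i, U i x = x)
    (hUpyth : ∀ x, ∑ i, ‖U i x‖ ^ 2 = ‖x‖ ^ 2)
    (δ : ℝ)
    (xk : EuclideanSpace ℝ (Fin d))
    (x1 : Fin n → EuclideanSpace ℝ (Fin d))
    (hx1 : ∀ i, x1 i = xk - δ • U i (f' xk)) :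
    (n : ℝ)⁻¹ * (∑ i, ‖x1 i - xstar‖ ^ 2)
      ≤ max (((δ * μ - 1) ^ 2 + (n : ℝ) - 1) / (n : ℝ))
            (((δ * L - 1) ^ 2 + (n : ℝ) - 1) / (n : ℝ)) * ‖xk - xstar‖ ^ 2 := by
  have hstar : f' xstar = 0 :=
    IsLocalMin.hasGradientAt_eq_zero (Filter.Eventually.of_forall hmin) (hgrad xstar)
  have hcocoercive := norm_gradient_sub_sub_smul_sq_le hμL hgrad hsc hsmooth xk xstar
  rw [hstar, sub_zero] at hcocoercive
  have hblocks : ∑ i, ‖x1 i - xstar‖ ^ 2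
      = (n - 1) * ‖xk - xstar‖ ^ 2 + ‖(xk - xstar) - δ • f' xk‖ ^ 2 := by
    have hsum : ∑ i, δ • U i (f' xk) = δ • f' xk := by rw [← Finset.smul_sum, hUsum]
    have hpyth : ∑ i, ‖δ • U i (f' xk)‖ ^ 2 = ‖δ • f' xk‖ ^ 2 := by
      simp only [norm_smul, mul_pow, ← Finset.mul_sum, hUpyth]
    have h := sum_norm_sub_sq_eq_of_sum_eq (xk - xstar) _ _ hsum hpyth
    rw [Fintype.card_fin] at h
    simp only [← h, hx1, sub_right_comm]
  have hstep := norm_sub_smul_sq_le_of_norm_sub_sq_le hμL hcocoercive δ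
  rw [hblocks, max_div_div_right (Nat.cast_nonneg n), max_sub_sub_right, max_add_add_right,
    div_mul_eq_mul_div, inv_mul_eq_div]
  gcongr
  linarith

/-- Linear contraction of randomized block-coordinate descent on an L-smooth
μ-strongly convex function. -/
theorem block_coordinate_descent_strongly_convex {d n : ℕ} (hn : 0 < n)
    (L μ : ℝ) (hμ : 0 < μ) (hμL : μ ≤ L)
    (f : EuclideanSpace ℝ (Fin d) → ℝ)
    (f' : EuclideanSpace ℝ (Fin d) → EuclideanSpace ℝ (Fin d))
    (hgrad : ∀ x, HasGradientAt f (f' x) x)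
    (hsc : ConvexOn ℝ Set.univ (fun x => f x - μ / 2 * ‖x‖ ^ 2))
    (hsmooth : ∀ x y, ‖f' x - f' y‖ ≤ L * ‖x - y‖)
    (xstar : EuclideanSpace ℝ (Fin d)) (hmin : ∀ y, f xstar ≤ f y)
    (U : Fin n → EuclideanSpace ℝ (Fin d) →L[ℝ] EuclideanSpace ℝ (Fin d))
    (hUproj : ∀ i x, U i (U i x) = U i x)
    (hUsum : ∀ x, ∑ i, U i x = x)
    (hUpyth : ∀ x, ∑ i, ‖U i x‖ ^ 2 = ‖x‖ ^ 2)
    (δ : ℝ) (hδ : 0 ≤ δ)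
    (xk : EuclideanSpace ℝ (Fin d))
    (x1 : Fin n → EuclideanSpace ℝ (Fin d))
    (hx1 : ∀ i, x1 i = xk - δ • U i (f' xk)) :
    (n : ℝ)⁻¹ * (∑ i, ‖x1 i - xstar‖ ^ 2)
      ≤ max (((δ * μ - 1) ^ 2 + (n : ℝ) - 1) / (n : ℝ))
            (((δ * L - 1) ^ 2 + (n : ℝ) - 1) / (n : ℝ)) * ‖xk - xstar‖ ^ 2 :=
  block_coordinate_descent_strongly_convex_general L μ hμL f f' hgrad hsc hsmooth xstar hmin U hUsum
    hUpyth δ xk x1 hx1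
end

section
/- For SGD with primal averaging evaluated at the true running average: y_{k+1} = (d_k/(d_k+1)) y_k + (1/(d_k+1)) x_k, x_{k+1} = x_k - δ_k G(y_{k+1}; i_k), with d_{k+1} = d_k + 1 and 0 ≤ δ_k ≤ 1/L, if f is L-smooth convex and the oracle is unbiased with variance ≤ σ², then d_{k+1} δ_k L (f(y_{k+1}) - f⋆) + (L/2) E_{i_k}‖x_{k+1} - x⋆‖² ≤ d_k δ_k L (f(y_k) - f⋆) + (L/2)‖x_k - x⋆‖² + (L δ_k²/2) σ². -/
open Finset RealInnerProductSpace

/-! Everything reduces to the deterministic step with the true gradient `g = ∇f(y_{k+1})`.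
Convexity at `y_k` gives `f(y_{k+1}) - f(y_k) ≤ ⟪g, y_{k+1} - y_k⟫`, and co-coercivity of an
`L`-smooth convex function at the minimiser gives
`f(y_{k+1}) - f⋆ + ‖g‖²/(2L) ≤ ⟪g, y_{k+1} - x⋆⟫`. Since
`x_k - x⋆ = d_k (y_{k+1} - y_k) + (y_{k+1} - x⋆)`, these combine with the expansion of
`‖x_k - δ g - x⋆‖²`, whose term `δ²‖g‖²` is absorbed because `δ ≤ 1/L`. Averaging over the
oracle then adds exactly the variance term, by the bias-variance decomposition. -/

theorem inv_card_mul_sum_norm_sub_sq {E : Type*} [NormedAddCommGroup E] [InnerProductSpace ℝ E]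
    {ι : Type*} [Fintype ι] [Nonempty ι] (a : E) (G : ι → E) {m : E}
    (hm : (Fintype.card ι : ℝ)⁻¹ • ∑ i, G i = m) :
    (Fintype.card ι : ℝ)⁻¹ * ∑ i, ‖a - G i‖ ^ 2
      = ‖a - m‖ ^ 2 + (Fintype.card ι : ℝ)⁻¹ * ∑ i, ‖G i - m‖ ^ 2 := by
  have hcard : (Fintype.card ι : ℝ) ≠ 0 := Nat.cast_ne_zero.mpr Fintype.card_ne_zero
  have hcentered : ∑ i, (G i - m) = 0 := by
    rw [sum_sub_distrib, sum_const, card_univ, ← Nat.cast_smul_eq_nsmul ℝ, ← hm, smul_smul,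
      mul_inv_cancel₀ hcard, one_smul, sub_self]
  have hterm : ∀ i, ‖a - G i‖ ^ 2 = ‖a - m‖ ^ 2 - 2 * ⟪a - m, G i - m⟫ + ‖G i - m‖ ^ 2 := by
    intro i
    rw [← norm_sub_sq_real, sub_sub_sub_cancel_right]
  rw [sum_congr rfl fun i _ => hterm i, sum_add_distrib, sum_sub_distrib, ← mul_sum, ← inner_sum,
    hcentered, inner_zero_right, sum_const, card_univ, nsmul_eq_mul]
  field_simp
  ring


section Gradient

variable {E : Type*} [NormedAddCommGroup E] [InnerProductSpace ℝ E] [CompleteSpace E]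
  {f : E → ℝ} {f' : E → E} {L : ℝ}

theorem HasGradientAt.hasDerivAt_comp_line {g x v : E} {t : ℝ}
    (hf : HasGradientAt f g (x + t • v)) :
    HasDerivAt (fun s : ℝ => f (x + s • v)) ⟪g, v⟫ t := by
  have hline : HasDerivAt (fun s : ℝ => x + s • v) v t := by
    simpa using ((hasDerivAt_id t).smul_const v).const_add x
  have := (hasGradientAt_iff_hasFDerivAt.mp hf).comp_hasDerivAt t hline
  simp only [InnerProductSpace.toDual_apply_apply] at this
  exact this

theorem HasGradientAt.sub_inner_left {g x : E} (hf : HasGradientAt f g x) (a : E) :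
    HasGradientAt (fun z => f z - ⟪a, z⟫) (g - a) x := by
  rw [hasGradientAt_iff_hasFDerivAt, map_sub]
  exact (hasGradientAt_iff_hasFDerivAt.mp hf).sub (InnerProductSpace.toDual ℝ E a).hasFDerivAt

theorem IsLocalMin.hasGradientAt_eq_zero_s16 {g x : E} (hmin : IsLocalMin f x)
    (hf : HasGradientAt f g x) : g = 0 := by
  simpa using hmin.hasFDerivAt_eq_zero (hasGradientAt_iff_hasFDerivAt.mp hf)

theorem ConvexOn.add_inner_le_of_hasGradientAt_s16 (hconv : ConvexOn ℝ Set.univ f) {g x : E}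
    (hf : HasGradientAt f g x) (y : E) : f x + ⟪g, y - x⟫ ≤ f y := by
  have hline : ConvexOn ℝ Set.univ (fun t : ℝ => f (x + t • (y - x))) := by
    simpa [Function.comp_def, AffineMap.lineMap_apply_module', add_comm] using
      hconv.comp_affineMap (AffineMap.lineMap (k := ℝ) x y)
  have hslope := hline.le_slope_of_hasDerivAt (Set.mem_univ 0) (Set.mem_univ 1) one_pos
    (HasGradientAt.hasDerivAt_comp_line (by simpa using hf))
  simp only [slope_def_field, one_smul, add_sub_cancel, zero_smul, add_zero, sub_zero, div_one]
    at hslope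
  linarith

theorem le_add_inner_add_norm_sq_of_lipschitz_gradient
    (hf : ∀ x, HasGradientAt f (f' x) x)
    (hf' : ∀ x y, ‖f' x - f' y‖ ≤ L * ‖x - y‖) (x y : E) :
    f y ≤ f x + ⟪f' x, y - x⟫ + L / 2 * ‖y - x‖ ^ 2 := by
  set v := y - x
  set φ : ℝ → ℝ := fun t => f (x + t • v) - t * ⟪f' x, v⟫ - L * t ^ 2 / 2 * ‖v‖ ^ 2
  have hφ : ∀ t, HasDerivAt φ (⟪f' (x + t • v) - f' x, v⟫ - L * t * ‖v‖ ^ 2) t := by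
    intro t
    have := (((hf (x + t • v)).hasDerivAt_comp_line.sub ((hasDerivAt_id t).mul_const ⟪f' x, v⟫)).sub
      ((((hasDerivAt_pow 2 t).const_mul L).div_const 2).mul_const (‖v‖ ^ 2)))
    refine this.congr_deriv ?_
    rw [inner_sub_left]
    push_cast
    ring
  have hanti : AntitoneOn φ (Set.Icc 0 1) := by
    refine antitoneOn_of_hasDerivWithinAt_nonpos (convex_Icc 0 1)
      (fun t _ => (hφ t).continuousAt.continuousWithinAt) (fun t _ => (hφ t).hasDerivWithinAt) ?_
    intro t ht
    rw [interior_Icc] at ht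
    have hlip : ‖f' (x + t • v) - f' x‖ ≤ L * (t * ‖v‖) := by
      simpa [norm_smul, abs_of_pos ht.1] using hf' (x + t • v) x
    have := (real_inner_le_norm (f' (x + t • v) - f' x) v).trans
      (mul_le_mul_of_nonneg_right hlip (norm_nonneg v))
    linarith
  have h01 := hanti (Set.left_mem_Icc.mpr zero_le_one) (Set.right_mem_Icc.mpr zero_le_one)
    zero_le_one
  simp only [φ, v, one_smul, add_sub_cancel, zero_smul, add_zero] at h01
  linarith

theorem ConvexOn.add_inner_add_norm_sq_le_of_lipschitz_gradient
    (hf : ∀ x, HasGradientAt f (f' x) x) (hconv : ConvexOn ℝ Set.univ f) (hL : 0 < L)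
    (hf' : ∀ x y, ‖f' x - f' y‖ ≤ L * ‖x - y‖) (x y : E) :
    f y + ⟪f' y, x - y⟫ + 1 / (2 * L) * ‖f' x - f' y‖ ^ 2 ≤ f x := by
  set h : E → ℝ := fun z => f z - ⟪f' y, z⟫
  have hh : ∀ z, HasGradientAt h (f' z - f' y) z := fun z => (hf z).sub_inner_left (f' y)
  have hmin : ∀ z, h y ≤ h z := by
    have hconv_h : ConvexOn ℝ Set.univ h :=
      hconv.sub ((innerSL ℝ (f' y)).toLinearMap.concaveOn convex_univ)
    intro z
    simpa using hconv_h.add_inner_le_of_hasGradientAt_s16 (hh y) z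
  -- `h` is as smooth as `f` and minimised at `y`; compare `h y` with a gradient step from `x`.
  set w := f' x - f' y
  have hstep : h (x - L⁻¹ • w) ≤ h x - 1 / (2 * L) * ‖w‖ ^ 2 := by
    have := le_add_inner_add_norm_sq_of_lipschitz_gradient hh
      (fun a b => by simpa using hf' a b) x (x - L⁻¹ • w)
    rw [show f' x - f' y = w from rfl, sub_sub_cancel_left, inner_neg_right,
      real_inner_smul_right, real_inner_self_eq_norm_sq, norm_neg, norm_smul, Real.norm_eq_abs,
      abs_inv, abs_of_pos hL] at this
    convert this using 1
    field_simp
    ring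
  have := (hmin _).trans hstep
  simp only [h, inner_sub_right] at this ⊢
  linarith

theorem potential_le_of_average_gradient_step
    (hf : ∀ x, HasGradientAt f (f' x) x) (hconv : ConvexOn ℝ Set.univ f) (hL : 0 < L)
    (hf' : ∀ x y, ‖f' x - f' y‖ ≤ L * ‖x - y‖) {xstar : E} (hmin : ∀ y, f xstar ≤ f y)
    {δ dk : ℝ} (hδ0 : 0 ≤ δ) (hδ1 : δ ≤ 1 / L) (hdk : 0 ≤ dk) {xk yk y : E}
    (hy : (dk + 1) • y = dk • yk + xk) :
    (dk + 1) * δ * L * (f y - f xstar) + L / 2 * ‖xk - δ • f' y - xstar‖ ^ 2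
      ≤ dk * δ * L * (f yk - f xstar) + L / 2 * ‖xk - xstar‖ ^ 2 := by
  have hgap : f y - f xstar + δ / 2 * ‖f' y‖ ^ 2 ≤ ⟪f' y, y - xstar⟫ := by
    have hco := hconv.add_inner_add_norm_sq_le_of_lipschitz_gradient hf hL hf' xstar y
    have hstar : f' xstar = 0 :=
      IsLocalMin.hasGradientAt_eq_zero_s16 (Filter.Eventually.of_forall hmin) (hf xstar)
    rw [hstar, zero_sub, norm_neg, ← neg_sub, inner_neg_right] at hco
    have hδ : δ / 2 ≤ 1 / (2 * L) := by
      rw [show 1 / (2 * L) = 1 / L / 2 by ring]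
      linarith
    linarith [mul_le_mul_of_nonneg_right hδ (sq_nonneg ‖f' y‖)]
  have hsupport : f y - f yk ≤ ⟪f' y, y - yk⟫ := by
    have := hconv.add_inner_le_of_hasGradientAt_s16 (hf y) yk
    rw [← neg_sub, inner_neg_right] at this
    linarith
  have hsplit : xk - xstar = dk • (y - yk) + (y - xstar) := by
    rw [show xk = (dk + 1) • y - dk • yk by rw [hy]; abel]
    module
  have key : (dk + 1) * (f y - f xstar) + δ / 2 * ‖f' y‖ ^ 2
      ≤ dk * (f yk - f xstar) + ⟪f' y, xk - xstar⟫ := by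
    rw [hsplit, inner_add_right, real_inner_smul_right]
    linarith [mul_le_mul_of_nonneg_left hsupport hdk]
  have hexpand : ‖xk - δ • f' y - xstar‖ ^ 2
      = ‖xk - xstar‖ ^ 2 - 2 * δ * ⟪f' y, xk - xstar⟫ + δ ^ 2 * ‖f' y‖ ^ 2 := by
    rw [sub_right_comm, norm_sub_sq_real, real_inner_smul_right, real_inner_comm, norm_smul,
      mul_pow, Real.norm_eq_abs, sq_abs]
    ring
  rw [hexpand]
  linarith [mul_le_mul_of_nonneg_left key (mul_nonneg hL.le hδ0)]

end Gradient

/-- One-step potential inequality for SGD evaluated at the true running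
average iterate. -/
theorem sgd_true_average_potential_decrease {d n : ℕ} (hn : 0 < n)
    (L σ : ℝ) (hL : 0 < L)
    (f : EuclideanSpace ℝ (Fin d) → ℝ)
    (f' : EuclideanSpace ℝ (Fin d) → EuclideanSpace ℝ (Fin d))
    (hgrad : ∀ x, HasGradientAt f (f' x) x)
    (hconv : ConvexOn ℝ Set.univ f)
    (hsmooth : ∀ x y, ‖f' x - f' y‖ ≤ L * ‖x - y‖)
    (xstar : EuclideanSpace ℝ (Fin d)) (hmin : ∀ y, f xstar ≤ f y)
    (δ dk : ℝ) (hδ0 : 0 ≤ δ) (hδ1 : δ ≤ 1 / L) (hdk : 0 ≤ dk)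
    (xk yk y1 : EuclideanSpace ℝ (Fin d))
    (hy1 : y1 = (dk / (dk + 1)) • yk + (1 / (dk + 1)) • xk)
    (G : Fin n → EuclideanSpace ℝ (Fin d))
    (hunbiased : (n : ℝ)⁻¹ • (∑ i, G i) = f' y1)
    (hvar : (n : ℝ)⁻¹ * (∑ i, ‖G i - f' y1‖ ^ 2) ≤ σ ^ 2)
    (x1 : Fin n → EuclideanSpace ℝ (Fin d))
    (hx1 : ∀ i, x1 i = xk - δ • G i) :
    (dk + 1) * δ * L * (f y1 - f xstar)
        + L / 2 * ((n : ℝ)⁻¹ * ∑ i, ‖x1 i - xstar‖ ^ 2)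
      ≤ dk * δ * L * (f yk - f xstar) + L / 2 * ‖xk - xstar‖ ^ 2
        + (L * δ ^ 2 / 2) * σ ^ 2 := by
  have hy1' : (dk + 1) • y1 = dk • yk + xk := by
    have : dk + 1 ≠ 0 := by positivity
    rw [hy1, smul_add, smul_smul, smul_smul, mul_div_cancel₀ _ this, mul_one_div_cancel this,
      one_smul]
  have hstep := potential_le_of_average_gradient_step hgrad hconv hL hsmooth hmin hδ0 hδ1 hdk hy1'
  have : Nonempty (Fin n) := ⟨⟨0, hn⟩⟩
  have hsplit := inv_card_mul_sum_norm_sub_sq (xk - xstar) (fun i => δ • G i)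
    (m := δ • f' y1) (by rw [Fintype.card_fin, ← smul_sum, smul_comm, hunbiased])
  have hvar' : (n : ℝ)⁻¹ * ∑ i, ‖δ • G i - δ • f' y1‖ ^ 2 ≤ δ ^ 2 * σ ^ 2 := by
    simp_rw [← smul_sub, norm_smul, mul_pow, Real.norm_eq_abs, sq_abs, ← mul_sum]
    rw [mul_left_comm]
    exact mul_le_mul_of_nonneg_left hvar (sq_nonneg δ)
  have hx1' : ∀ i, x1 i - xstar = xk - xstar - δ • G i := fun i => by rw [hx1, sub_right_comm]
  rw [sub_right_comm] at hstep
  simp only [Fintype.card_fin] at hsplit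
  simp only [hx1', hsplit]
  linarith [mul_le_mul_of_nonneg_left hvar' (half_pos hL).le]
end

section
/- (Interpolation inequality for smooth strongly convex functions) If f : ℝ^d → ℝ is L-smooth and μ-strongly convex with 0 ≤ μ < L, then for all x, y: f(x) ≥ f(y) + ⟨f'(y), x - y⟩ + (1/(2(1 - μ/L)))·( (1/L)‖f'(x) - f'(y)‖² + μ‖x - y‖² - (2μ/L)⟨f'(x) - f'(y), x - y⟩ ). -/
/-!
Put `g = f - (μ/2)‖·‖²`, which is convex with gradient `f' - μ • id`. The descent lemma for `f`
(compare derivatives along a segment using the `L`-Lipschitz gradient) gives `g` a quadratic upper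
bound with constant `L - μ`. For a convex function with such an upper bound, the first-order lower
bound at `x` and the upper bound around `y`, both evaluated at `y + (L - μ)⁻¹ • (∇g x - ∇g y)`,
combine to `g x + ⟪∇g x, y - x⟫ + ‖∇g x - ∇g y‖² / (2 (L - μ)) ≤ g y`; rewriting this in terms of
`f` is the interpolation inequality.
-/

open InnerProductSpace Set AffineMap
open scoped RealInnerProductSpace

section Gradient

variable {E : Type*} [NormedAddCommGroup E] [InnerProductSpace ℝ E]

theorem half_mul_norm_sq_eq (μ : ℝ) (x y : E) :
    μ / 2 * ‖x‖ ^ 2 = μ / 2 * ‖y‖ ^ 2 + μ * ⟪y, x - y⟫ + μ / 2 * ‖x - y‖ ^ 2 := by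
  rw [norm_sub_sq_real, inner_sub_right, real_inner_self_eq_norm_sq, real_inner_comm]
  ring

variable [CompleteSpace E]

theorem HasGradientAt.hasDerivAt_comp_lineMap {f : E → ℝ} {g x z : E} {t : ℝ}
    (hf : HasGradientAt f g (lineMap x z t)) :
    HasDerivAt (fun s : ℝ => f (lineMap x z s)) ⟪g, z - x⟫ t := by
  simpa [Function.comp_def] using hf.hasFDerivAt.comp_hasDerivAt t hasDerivAt_lineMap

theorem HasGradientAt.sub_mul_norm_sq {f : E → ℝ} {g x : E} (hf : HasGradientAt f g x)
    (μ : ℝ) : HasGradientAt (fun w => f w - μ / 2 * ‖w‖ ^ 2) (g - μ • x) x := by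
  refine hasGradientAt_iff_hasFDerivAt.2 <| (hf.hasFDerivAt.sub
    ((hasStrictFDerivAt_norm_sq x).hasFDerivAt.const_mul (μ / 2))).congr_fderiv ?_
  ext w
  simp only [sub_apply, toDual_apply_apply, smul_apply, innerSL_apply_apply, nsmul_eq_mul,
    Nat.cast_ofNat, smul_eq_mul, inner_sub_left, real_inner_smul_left]
  ring

theorem ConvexOn.add_inner_gradient_le {s : Set E} {f : E → ℝ} {g x z : E}
    (hf : ConvexOn ℝ s f) (hx : x ∈ s) (hz : z ∈ s) (hg : HasGradientAt f g x) :
    f x + ⟪g, z - x⟫ ≤ f z := by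
  have hslope := (hf.comp_affineMap (lineMap x z)).le_slope_of_hasDerivAt
    (x := 0) (y := 1) (by simpa using hx) (by simpa using hz) zero_lt_one
    (HasGradientAt.hasDerivAt_comp_lineMap (by simpa using hg))
  simp only [slope_def_field, Function.comp_apply, lineMap_apply_one, lineMap_apply_zero,
    sub_zero, div_one] at hslope
  linarith

theorem le_add_inner_gradient_add_mul_norm_sq {f : E → ℝ} {f' : E → E} {L : ℝ}
    (hgrad : ∀ x, HasGradientAt f (f' x) x)
    (hsmooth : ∀ x y, ‖f' x - f' y‖ ≤ L * ‖x - y‖) (x y : E) :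
    f x ≤ f y + ⟪f' y, x - y⟫ + L / 2 * ‖x - y‖ ^ 2 := by
  set ψ : ℝ → ℝ := fun t => f (lineMap y x t) - t * ⟪f' y, x - y⟫ - L / 2 * t ^ 2 * ‖x - y‖ ^ 2
  have hψ : ∀ t, HasDerivAt ψ (⟪f' (lineMap y x t) - f' y, x - y⟫ - L * t * ‖x - y‖ ^ 2) t :=
    fun t => ((((hgrad _).hasDerivAt_comp_lineMap).sub
      ((hasDerivAt_id t).mul_const _)).sub
      (((hasDerivAt_pow 2 t).const_mul (L / 2)).mul_const _)).congr_deriv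
      (by rw [inner_sub_left]; ring)
  have hψ_nonpos : ∀ t, 0 ≤ t →
      ⟪f' (lineMap y x t) - f' y, x - y⟫ - L * t * ‖x - y‖ ^ 2 ≤ 0 := by
    intro t ht
    have hstep : ‖lineMap y x t - y‖ = t * ‖x - y‖ := by
      rw [lineMap_apply_module', add_sub_cancel_right, norm_smul, Real.norm_of_nonneg ht]
    calc ⟪f' (lineMap y x t) - f' y, x - y⟫ - L * t * ‖x - y‖ ^ 2
        ≤ ‖f' (lineMap y x t) - f' y‖ * ‖x - y‖ - L * t * ‖x - y‖ ^ 2 := by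
          gcongr; exact real_inner_le_norm _ _
      _ ≤ L * ‖lineMap y x t - y‖ * ‖x - y‖ - L * t * ‖x - y‖ ^ 2 := by
          gcongr; exact hsmooth _ _
      _ = 0 := by rw [hstep]; ring
  have hanti : AntitoneOn ψ (Icc 0 1) :=
    antitoneOn_of_hasDerivWithinAt_nonpos (convex_Icc 0 1)
      (fun t _ => (hψ t).continuousAt.continuousWithinAt)
      (fun t _ => (hψ t).hasDerivWithinAt)
      (fun t ht => hψ_nonpos t (interior_subset ht).1)
  have hψ01 := hanti (left_mem_Icc.2 zero_le_one) (right_mem_Icc.2 zero_le_one) zero_le_one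
  simp only [ψ, lineMap_apply_one, lineMap_apply_zero] at hψ01
  linarith

theorem ConvexOn.add_inner_gradient_add_norm_sq_le {g : E → ℝ} {g' : E → E} {K : ℝ}
    (hK : 0 < K) (hconv : ConvexOn ℝ univ g) (hgrad : ∀ x, HasGradientAt g (g' x) x)
    (hdes : ∀ u w, g u ≤ g w + ⟪g' w, u - w⟫ + K / 2 * ‖u - w‖ ^ 2) (x y : E) :
    g x + ⟪g' x, y - x⟫ + 1 / (2 * K) * ‖g' x - g' y‖ ^ 2 ≤ g y := by
  set D := g' x - g' y
  have hx := hconv.add_inner_gradient_le (mem_univ x) (mem_univ (y + K⁻¹ • D)) (hgrad x)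
  have hy := hdes (y + K⁻¹ • D) y
  rw [add_sub_right_comm, inner_add_right, real_inner_smul_right] at hx
  rw [add_sub_cancel_left, real_inner_smul_right, norm_smul,
    Real.norm_of_nonneg (inv_nonneg.2 hK.le)] at hy
  have hD : K⁻¹ * ⟪g' x, D⟫ - K⁻¹ * ⟪g' y, D⟫ = K⁻¹ * ‖D‖ ^ 2 := by
    rw [← mul_sub, ← inner_sub_left, real_inner_self_eq_norm_sq]
  have hnorm : K / 2 * (K⁻¹ * ‖D‖) ^ 2 = 1 / (2 * K) * ‖D‖ ^ 2 := by
    field_simp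
  have hcoef : K⁻¹ * ‖D‖ ^ 2 = 2 * (1 / (2 * K) * ‖D‖ ^ 2) := by
    field_simp
  linarith

theorem add_inner_gradient_add_norm_sq_le_of_convexOn_sub {f : E → ℝ} {f' : E → E} {L μ : ℝ}
    (hμL : μ < L) (hgrad : ∀ x, HasGradientAt f (f' x) x)
    (hsc : ConvexOn ℝ univ (fun x => f x - μ / 2 * ‖x‖ ^ 2))
    (hsmooth : ∀ x y, ‖f' x - f' y‖ ≤ L * ‖x - y‖) (x y : E) :
    f y + ⟪f' y, x - y⟫ + μ / 2 * ‖x - y‖ ^ 2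
      + 1 / (2 * (L - μ)) * ‖f' x - f' y - μ • (x - y)‖ ^ 2 ≤ f x := by
  have hdes : ∀ u w, f u - μ / 2 * ‖u‖ ^ 2 ≤ f w - μ / 2 * ‖w‖ ^ 2
      + ⟪f' w - μ • w, u - w⟫ + (L - μ) / 2 * ‖u - w‖ ^ 2 := by
    intro u w
    have hf := le_add_inner_gradient_add_mul_norm_sq hgrad hsmooth u w
    have hsq := half_mul_norm_sq_eq μ u w
    rw [inner_sub_left, real_inner_smul_left]
    linarith
  have hco := hsc.add_inner_gradient_add_norm_sq_le (sub_pos.2 hμL)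
    (fun w => (hgrad w).sub_mul_norm_sq μ) hdes y x
  rw [show f' y - μ • y - (f' x - μ • x) = -(f' x - f' y - μ • (x - y)) by module,
    norm_neg, inner_sub_left, real_inner_smul_left] at hco
  linarith [half_mul_norm_sq_eq μ x y]

end Gradient

/-- Interpolation inequality for L-smooth μ-strongly convex functions
(μ-strong convexity meaning `f - (μ/2)‖·‖²` is convex; μ = 0 is allowed). -/
theorem smooth_strongly_convex_interpolation {d : ℕ} (L μ : ℝ)
    (hμ : 0 ≤ μ) (hμL : μ < L)
    (f : EuclideanSpace ℝ (Fin d) → ℝ)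
    (f' : EuclideanSpace ℝ (Fin d) → EuclideanSpace ℝ (Fin d))
    (hgrad : ∀ x, HasGradientAt f (f' x) x)
    (hsc : ConvexOn ℝ Set.univ (fun x => f x - μ / 2 * ‖x‖ ^ 2))
    (hsmooth : ∀ x y, ‖f' x - f' y‖ ≤ L * ‖x - y‖) :
    ∀ x y : EuclideanSpace ℝ (Fin d),
      f x ≥ f y + (inner ℝ (f' y) (x - y) : ℝ)
        + 1 / (2 * (1 - μ / L)) *
          ((1 / L) * ‖f' x - f' y‖ ^ 2 + μ * ‖x - y‖ ^ 2
            - (2 * μ / L) * (inner ℝ (f' x - f' y) (x - y) : ℝ)) := by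
  intro x y
  have hL : 0 < L := hμ.trans_lt hμL
  have hLμ : L - μ ≠ 0 := (sub_pos.2 hμL).ne'
  have h := add_inner_gradient_add_norm_sq_le_of_convexOn_sub hμL hgrad hsc hsmooth x y
  rw [norm_sub_sq_real (f' x - f' y), real_inner_smul_right, norm_smul, mul_pow,
    Real.norm_eq_abs, sq_abs] at h
  have hcoef : 1 / (2 * (1 - μ / L)) * ((1 / L) * ‖f' x - f' y‖ ^ 2 + μ * ‖x - y‖ ^ 2
        - (2 * μ / L) * ⟪f' x - f' y, x - y⟫)
      = μ / 2 * ‖x - y‖ ^ 2 + 1 / (2 * (L - μ)) * (‖f' x - f' y‖ ^ 2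
        - 2 * (μ * ⟪f' x - f' y, x - y⟫) + μ ^ 2 * ‖x - y‖ ^ 2) := by
    field_simp
    ring
  rw [ge_iff_le, hcoef]
  linarith
end
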